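/- arXiv:2404.17223 — 4 statements merged into one kernel-verified Lean document; each statement's English description precedes it below -/
import Mathlib

section
/- Let G be a finite simple graph and let B be a minimum cycle basis of G. Then for all cycles c1, c2 of G with c1 ∈ B, c2 ∉ B and λ_B(c1, c2) = 1, one has ω(c1) ≤ ω(c2). -/
namespace MCBI

variable {V : Type*} [Fintype V] [DecidableEq V]

/-- A *cycle* of a simple graph `G`: a set of edges of `G` such that every vertex of `G`
is incident to an even number of them. -/
def IsCycle (G : SimpleGraph V) (c : Finset (Sym2 V)) : Prop :=
  (↑c : Set (Sym2 V)) ⊆ G.edgeSet ∧ ∀ v : V, Even (c.filter (fun e => v ∈ e)).card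

/-- The `⊕`-sum (GF(2)-sum, i.e. iterated symmetric difference) of a finite set of cycles:
an edge lies in the sum iff it lies in an odd number of the cycles. -/
def cycleSum (D : Finset (Finset (Sym2 V))) : Finset (Sym2 V) :=
  Finset.univ.filter fun e => Odd (D.filter (fun c => e ∈ c)).card

/-- Linear independence over `ℤ/2ℤ`: no nonempty subset sums to the empty cycle. -/
def LinIndep (B : Finset (Finset (Sym2 V))) : Prop :=
  ∀ D ⊆ B, D.Nonempty → cycleSum D ≠ ∅

/-- `B` spans every cycle of `G`. -/
def SpansCycles (G : SimpleGraph V) (B : Finset (Finset (Sym2 V))) : Prop :=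
  ∀ c : Finset (Sym2 V), IsCycle G c → ∃ D ⊆ B, cycleSum D = c

/-- A *cycle basis* of `G`: a linearly independent set of cycles spanning every cycle of `G`. -/
def IsCycleBasis (G : SimpleGraph V) (B : Finset (Finset (Sym2 V))) : Prop :=
  (∀ c ∈ B, IsCycle G c) ∧ LinIndep B ∧ SpansCycles G B

/-- `λ_B(c, d) = 1`: the cycle `c` belongs to a subset of `B` summing to `d`
(the unique such subset when `B` is a basis). -/
def lambdaEq1 (B : Finset (Finset (Sym2 V))) (c d : Finset (Sym2 V)) : Prop :=
  ∃ D ⊆ B, cycleSum D = d ∧ c ∈ D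

/-- Total weight of a set of cycles: the sum of the numbers of edges of its cycles. -/
def weight (B : Finset (Finset (Sym2 V))) : ℕ := ∑ c ∈ B, c.card

/-- A *minimum cycle basis*: a cycle basis of minimum total weight. -/
def IsMCB (G : SimpleGraph V) (B : Finset (Finset (Sym2 V))) : Prop :=
  IsCycleBasis G B ∧
    ∀ B' : Finset (Finset (Sym2 V)), IsCycleBasis G B' → weight B ≤ weight B'

/-- Membership in the `ℤ/2ℤ`-linear span of a set `S` of cycles. -/
def InSpan (S : Set (Finset (Sym2 V))) (c : Finset (Sym2 V)) : Prop :=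
  ∃ D : Finset (Finset (Sym2 V)), (↑D : Set (Finset (Sym2 V))) ⊆ S ∧ cycleSum D = c

/-- The vertices incident to the edges of a cycle. -/
def cycVerts (c : Finset (Sym2 V)) : Finset V :=
  Finset.univ.filter fun v => ∃ e ∈ c, v ∈ e

/-- A finite set of edges forms a connected subgraph: the graph consisting of these edges
together with their endpoints is connected. -/
def EdgesConnected (E : Finset (Sym2 V)) : Prop :=
  ((SimpleGraph.fromEdgeSet (↑E : Set (Sym2 V))).induce {v : V | ∃ e ∈ E, v ∈ e}).Connected

/-- An *elementary cycle*: a nonempty cycle whose edges form a connected subgraph in which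
every incident vertex has degree exactly `2`. -/
def IsElementaryCycle (G : SimpleGraph V) (c : Finset (Sym2 V)) : Prop :=
  IsCycle G c ∧ c.Nonempty ∧
    (∀ v : V, (∃ e ∈ c, v ∈ e) → (c.filter (fun e => v ∈ e)).card = 2) ∧
    EdgesConnected c

/-- The family of independent sets of the matroid `𝓜(G)`: the sets of cycles contained
in some minimum cycle basis of `G`. -/
def matroidIndep (G : SimpleGraph V) : Set (Finset (Finset (Sym2 V))) :=
  {D | ∃ B, IsMCB G B ∧ D ⊆ B}

/-- A set `B` of cycles of the intersection graph `G` is *feasible* for the instance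
`G₁, …, G_k` if for every `i` there is a minimum cycle basis of `Gᵢ` containing `B`. -/
def Feasible {k : ℕ} (Gs : Fin k → SimpleGraph V) (G : SimpleGraph V)
    (B : Finset (Finset (Sym2 V))) : Prop :=
  (∀ c ∈ B, IsCycle G c) ∧ ∀ i : Fin k, ∃ Bi, IsMCB (Gs i) Bi ∧ B ⊆ Bi


open scoped symmDiff

lemma card_symmDiff_aux {α : Type*} [DecidableEq α] (s t : Finset α) :
    (s ∆ t).card + 2 * (s ∩ t).card = s.card + t.card := by
  have h1 : s ∆ t = (s ∪ t) \ (s ∩ t) := by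
    ext x; simp [Finset.mem_symmDiff]; tauto
  have h2 := Finset.card_union_add_card_inter s t
  have h3 : (s ∩ t) ⊆ (s ∪ t) := (Finset.inter_subset_left).trans Finset.subset_union_left
  have h5 := Finset.card_le_card h3
  rw [h1, Finset.card_sdiff_of_subset h3]
  omega

lemma mem_cycleSum {D : Finset (Finset (Sym2 V))} {e : Sym2 V} :
    e ∈ cycleSum D ↔ Odd (D.filter (fun c => e ∈ c)).card := by
  simp [cycleSum]

lemma cycleSum_symmDiff (D₁ D₂ : Finset (Finset (Sym2 V))) :
    cycleSum (D₁ ∆ D₂) = cycleSum D₁ ∆ cycleSum D₂ := by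
  ext e
  have hf : (D₁ ∆ D₂).filter (fun c => e ∈ c)
      = (D₁.filter (fun c => e ∈ c)) ∆ (D₂.filter (fun c => e ∈ c)) := by
    ext x; simp [Finset.mem_symmDiff]; tauto
  have hc := card_symmDiff_aux (D₁.filter (fun c => e ∈ c)) (D₂.filter (fun c => e ∈ c))
  rw [Finset.mem_symmDiff, mem_cycleSum, mem_cycleSum, mem_cycleSum, hf]
  simp only [Nat.odd_iff] at *
  constructor
  · intro h; omega
  · intro h; omega

lemma cycleSum_singleton (c : Finset (Sym2 V)) : cycleSum {c} = c := by
  ext e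
  rw [mem_cycleSum]
  by_cases h : e ∈ c <;> simp [Finset.filter_singleton, h]

lemma cycleSum_insert {c : Finset (Sym2 V)} {D : Finset (Finset (Sym2 V))} (h : c ∉ D) :
    cycleSum (insert c D) = c ∆ cycleSum D := by
  have he : insert c D = {c} ∆ D := by
    ext x; simp [Finset.mem_symmDiff]
    constructor
    · rintro (rfl | hx)
      · exact Or.inl ⟨rfl, h⟩
      · by_cases hxc : x = c
        · subst hxc; exact Or.inl ⟨rfl, h⟩
        · exact Or.inr ⟨hx, hxc⟩
    · tauto
  rw [he, cycleSum_symmDiff, cycleSum_singleton]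

theorem mcb_weight_le_of_lambda' (G : SimpleGraph V) (B : Finset (Finset (Sym2 V)))
    (hB : IsMCB G B) (c1 c2 : Finset (Sym2 V))
    (hc1 : IsCycle G c1) (hc2 : IsCycle G c2)
    (hc1B : c1 ∈ B) (hc2B : c2 ∉ B) (hlam : lambdaEq1 B c1 c2) :
    c1.card ≤ c2.card := by
  obtain ⟨⟨hcyc, hindep, hspan⟩, hmin⟩ := hB
  obtain ⟨D, hDB, hDsum, hc1D⟩ := hlam
  have hne : c1 ≠ c2 := fun h => hc2B (h ▸ hc1B)
  set B' := insert c2 (B.erase c1) with hB'def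
  have hc2ne : c2 ∉ B.erase c1 := fun h => hc2B (Finset.mem_of_mem_erase h)
  have hc1B' : c1 ∉ B' := by
    intro h
    rcases Finset.mem_insert.1 h with h | h
    · exact hne h
    · exact (Finset.notMem_erase c1 B) h
  -- B' is a cycle basis
  have hbasis' : IsCycleBasis G B' := by
    refine ⟨?_, ?_, ?_⟩
    · intro c hc
      rcases Finset.mem_insert.1 hc with rfl | hc
      · exact hc2
      · exact hcyc c (Finset.mem_of_mem_erase hc)
    · -- LinIndep
      intro D' hD'B' hD'ne hsum0
      by_cases hc2D' : c2 ∈ D'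
      · set E := D'.erase c2 with hEdef
        have hEB : E ⊆ B := by
          intro x hx
          have hx1 := Finset.mem_of_mem_erase hx
          have hx2 : x ≠ c2 := Finset.ne_of_mem_erase hx
          rcases Finset.mem_insert.1 (hD'B' hx1) with h | h
          · exact absurd h hx2
          · exact Finset.mem_of_mem_erase h
        have hc1E : c1 ∉ E := fun h => hc1B' (hD'B' (Finset.mem_of_mem_erase h))
        have hD'eq : D' = insert c2 E := (Finset.insert_erase hc2D').symm
        have hs : cycleSum (D ∆ E) = ∅ := by
          rw [cycleSum_symmDiff, hDsum]
          rw [hD'eq, cycleSum_insert (Finset.notMem_erase c2 D')] at hsum0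
          exact hsum0
        have hsubB : D ∆ E ⊆ B := by
          intro x hx
          rcases Finset.mem_symmDiff.1 hx with ⟨h, _⟩ | ⟨h, _⟩
          · exact hDB h
          · exact hEB h
        have hnonempty : (D ∆ E).Nonempty :=
          ⟨c1, Finset.mem_symmDiff.2 (Or.inl ⟨hc1D, hc1E⟩)⟩
        exact hindep (D ∆ E) hsubB hnonempty hs
      · have : D' ⊆ B := by
          intro x hx
          rcases Finset.mem_insert.1 (hD'B' hx) with rfl | h
          · exact absurd hx hc2D'
          · exact Finset.mem_of_mem_erase h
        exact hindep D' this hD'ne hsum0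
    · -- Spans
      intro c hc
      obtain ⟨E, hEB, hEsum⟩ := hspan c hc
      by_cases hc1E : c1 ∈ E
      · set F := insert c2 (E ∆ D) with hFdef
        have hc1ED : c1 ∉ E ∆ D := by
          intro h
          rcases Finset.mem_symmDiff.1 h with ⟨_, h2⟩ | ⟨_, h2⟩
          · exact h2 hc1D
          · exact h2 hc1E
        have hc2ED : c2 ∉ E ∆ D := by
          intro h
          rcases Finset.mem_symmDiff.1 h with ⟨h1, _⟩ | ⟨h1, _⟩
          · exact hc2B (hEB h1)
          · exact hc2B (hDB h1)
        refine ⟨F, ?_, ?_⟩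
        · intro x hx
          rcases Finset.mem_insert.1 hx with rfl | hx
          · exact Finset.mem_insert_self _ _
          · refine Finset.mem_insert_of_mem (Finset.mem_erase.2 ⟨?_, ?_⟩)
            · exact fun h => hc1ED (h ▸ hx)
            · rcases Finset.mem_symmDiff.1 hx with ⟨h, _⟩ | ⟨h, _⟩
              · exact hEB h
              · exact hDB h
        · rw [hFdef, cycleSum_insert hc2ED, cycleSum_symmDiff, hEsum, ← hDsum]
          rw [symmDiff_comm c (cycleSum D), symmDiff_symmDiff_cancel_left]
      · refine ⟨E, ?_, hEsum⟩
        intro x hx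
        exact Finset.mem_insert_of_mem
          (Finset.mem_erase.2 ⟨fun h => hc1E (h ▸ hx), hEB hx⟩)
  have hw := hmin B' hbasis'
  have h1 : weight B' = c2.card + weight (B.erase c1) := by
    rw [hB'def, weight, Finset.sum_insert hc2ne]; rfl
  have h2 : weight (B.erase c1) + c1.card = weight B :=
    Finset.sum_erase_add B _ hc1B
  omega


/-- If `B` is a minimum cycle basis of `G`, `c₁ ∈ B`, `c₂ ∉ B` are cycles
of `G` and `λ_B(c₁, c₂) = 1`, then `ω(c₁) ≤ ω(c₂)`. -/
theorem mcb_weight_le_of_lambda (G : SimpleGraph V) (B : Finset (Finset (Sym2 V)))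
    (hB : IsMCB G B) (c1 c2 : Finset (Sym2 V))
    (hc1 : IsCycle G c1) (hc2 : IsCycle G c2)
    (hc1B : c1 ∈ B) (hc2B : c2 ∉ B) (hlam : lambdaEq1 B c1 c2) :
    c1.card ≤ c2.card :=
  mcb_weight_le_of_lambda' G B hB c1 c2 hc1 hc2 hc1B hc2B hlam

end MCBI
end

section
/- Let G be a finite simple graph and let B1, B2 be two cycle bases of G such that for each B ∈ {B1, B2} and all cycles c1 ∈ B, c2 ∉ B with λ_B(c1, c2) = 1 one has ω(c1) ≤ ω(c2). Then for every c2 ∈ B2 \ B1 there exists c1 ∈ B1 \ B2 such that (B2 \ {c2}) ∪ {c1} is a cycle basis of G having the same total weight as B2. -/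
namespace MCBI

variable {V : Type*} [Fintype V] [DecidableEq V]

section Aux
open scoped symmDiff
set_option linter.unusedSectionVars false

def chi (c : Finset (Sym2 V)) : Sym2 V → ZMod 2 := fun e => if e ∈ c then 1 else 0

lemma chi_inj {c d : Finset (Sym2 V)} (h : chi c = chi d) : c = d := by
  ext e
  have := congrFun h e
  simp only [chi] at this
  by_cases hc : e ∈ c <;> by_cases hd : e ∈ d <;> simp_all

lemma chi_empty : chi (∅ : Finset (Sym2 V)) = 0 := by
  funext e; simp [chi]

lemma add_self_chi (x : Sym2 V → ZMod 2) : x + x = 0 := by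
  funext e
  have : ∀ a : ZMod 2, a + a = 0 := by decide
  exact this (x e)

lemma natCast_zmod_two_eq_one_iff (n : ℕ) : (n : ZMod 2) = 1 ↔ Odd n := by
  rw [Nat.odd_iff, ← ZMod.natCast_mod n 2]
  rcases Nat.mod_two_eq_zero_or_one n with h | h <;> rw [h] <;> simp

lemma chi_cycleSum (D : Finset (Finset (Sym2 V))) :
    chi (cycleSum D) = ∑ c ∈ D, chi c := by
  funext e
  rw [Finset.sum_apply]
  simp only [chi, cycleSum, Finset.mem_filter, Finset.mem_univ, true_and]
  rw [Finset.sum_boole]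
  by_cases h : Odd (D.filter (fun c => e ∈ c)).card
  · rw [if_pos h, (natCast_zmod_two_eq_one_iff _).mpr h]
  · rw [if_neg h]
    rcases Nat.even_or_odd (D.filter (fun c => e ∈ c)).card with he | ho
    · rw [Nat.even_iff] at he
      rw [← ZMod.natCast_mod, he]; simp
    · exact absurd ho h

lemma cycleSum_eq_iff {D E : Finset (Finset (Sym2 V))} :
    cycleSum D = cycleSum E ↔ ∑ c ∈ D, chi c = ∑ c ∈ E, chi c := by
  constructor
  · intro h; rw [← chi_cycleSum, ← chi_cycleSum, h]
  · intro h; exact chi_inj (by rw [chi_cycleSum, chi_cycleSum, h])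

lemma sum_symmDiff' (A B : Finset (Finset (Sym2 V))) :
    ∑ c ∈ (A ∆ B), chi c = ∑ c ∈ A, chi c + ∑ c ∈ B, chi c := by
  have hd : Disjoint (A \ B) (B \ A) := disjoint_sdiff_sdiff
  have h1 : ∑ c ∈ (A ∆ B), chi c = ∑ c ∈ A \ B, chi c + ∑ c ∈ B \ A, chi c := by
    rw [symmDiff_def, Finset.sup_eq_union, Finset.sum_union hd]
  have h2 : ∑ c ∈ A, chi c = ∑ c ∈ A \ B, chi c + ∑ c ∈ A ∩ B, chi c := by
    rw [add_comm, Finset.sum_inter_add_sum_sdiff]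
  have h3 : ∑ c ∈ B, chi c = ∑ c ∈ B \ A, chi c + ∑ c ∈ A ∩ B, chi c := by
    rw [add_comm, Finset.inter_comm, Finset.sum_inter_add_sum_sdiff]
  rw [h1, h2, h3]
  have := add_self_chi (∑ c ∈ A ∩ B, chi c)
  abel_nf
  rw [show (2:ℤ) • ∑ c ∈ A ∩ B, chi c = ∑ c ∈ A ∩ B, chi c + ∑ c ∈ A ∩ B, chi c by
    rw [two_zsmul], this, add_zero]

lemma rep_unique {B D E : Finset (Finset (Sym2 V))}
    (hB : ∀ F ⊆ B, F.Nonempty → cycleSum F ≠ (∅ : Finset (Sym2 V)))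
    (hD : D ⊆ B) (hE : E ⊆ B) (h : cycleSum D = cycleSum E) : D = E := by
  by_contra hne
  have hS : (D ∆ E).Nonempty := by
    rw [Finset.nonempty_iff_ne_empty]
    intro h0
    exact hne (symmDiff_eq_bot.mp h0)
  have hsub : D ∆ E ⊆ B := by
    intro x hx
    rcases Finset.mem_symmDiff.mp hx with ⟨h1,_⟩|⟨h1,_⟩
    exacts [hD h1, hE h1]
  apply hB _ hsub hS
  apply chi_inj
  rw [chi_cycleSum, sum_symmDiff', chi_empty, cycleSum_eq_iff.mp h, add_self_chi]

lemma nsmul_char2 (n : ℕ) (x : Sym2 V → ZMod 2) :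
    n • x = if Odd n then x else 0 := by
  induction n with
  | zero => simp
  | succ n ih =>
    rw [succ_nsmul, ih]
    by_cases h : Odd n
    · rw [if_pos h, if_neg (by simp [Nat.odd_add_one, h]), add_self_chi]
    · rw [if_neg h, if_pos (by simp [Nat.odd_add_one, h]), zero_add]

lemma cycleSum_parity_rep (D1 B2 : Finset (Finset (Sym2 V)))
    (R : Finset (Sym2 V) → Finset (Finset (Sym2 V)))
    (hR : ∀ c ∈ D1, R c ⊆ B2 ∧ cycleSum (R c) = c) :
    cycleSum (B2.filter fun b => Odd ((D1.filter fun c => b ∈ R c).card)) = cycleSum D1 := by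
  apply chi_inj
  rw [chi_cycleSum, chi_cycleSum]
  calc ∑ b ∈ (B2.filter fun b => Odd ((D1.filter fun c => b ∈ R c).card)), chi b
      = ∑ b ∈ B2, if Odd ((D1.filter fun c => b ∈ R c).card) then chi b else 0 :=
        Finset.sum_filter _ _
    _ = ∑ b ∈ B2, ∑ c ∈ D1, if b ∈ R c then chi b else 0 := by
        refine Finset.sum_congr rfl fun b _ => ?_
        rw [← Finset.sum_filter, Finset.sum_const, nsmul_char2]
    _ = ∑ c ∈ D1, ∑ b ∈ B2, if b ∈ R c then chi b else 0 := Finset.sum_comm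
    _ = ∑ c ∈ D1, ∑ b ∈ R c, chi b := by
        refine Finset.sum_congr rfl fun c hc => ?_
        rw [Finset.sum_ite_mem, Finset.inter_eq_right.mpr (hR c hc).1]
    _ = ∑ c ∈ D1, chi c :=
        Finset.sum_congr rfl fun c hc => by rw [← chi_cycleSum, (hR c hc).2]

end Aux
open scoped symmDiff

/-- Let `B₁, B₂` be two cycle bases such that in each of them, any cycle
`c₁` of the basis generating (λ = 1) a cycle `c₂` outside the basis satisfies
`ω(c₁) ≤ ω(c₂)`. Then every `c₂ ∈ B₂ \ B₁` can be exchanged with some `c₁ ∈ B₁ \ B₂`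
so that `(B₂ \ {c₂}) ∪ {c₁}` is a cycle basis of the same total weight as `B₂`. -/
theorem exchange_between_weight_minimal_bases (G : SimpleGraph V)
    (B1 B2 : Finset (Finset (Sym2 V)))
    (hB1 : IsCycleBasis G B1) (hB2 : IsCycleBasis G B2)
    (hw1 : ∀ c1 ∈ B1, ∀ c2 : Finset (Sym2 V), IsCycle G c2 → c2 ∉ B1 →
      lambdaEq1 B1 c1 c2 → c1.card ≤ c2.card)
    (hw2 : ∀ c1 ∈ B2, ∀ c2 : Finset (Sym2 V), IsCycle G c2 → c2 ∉ B2 →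
      lambdaEq1 B2 c1 c2 → c1.card ≤ c2.card) :
    ∀ c2 ∈ B2 \ B1, ∃ c1 ∈ B1 \ B2,
      IsCycleBasis G (B2 \ {c2} ∪ {c1}) ∧ weight (B2 \ {c2} ∪ {c1}) = weight B2 := by
  rintro c2 hc2
  rw [Finset.mem_sdiff] at hc2
  obtain ⟨hc2B2, hc2nB1⟩ := hc2
  obtain ⟨hcyc1, hind1, hspan1⟩ := hB1
  obtain ⟨hcyc2, hind2, hspan2⟩ := hB2
  obtain ⟨D1, hD1sub, hD1sum⟩ := hspan1 c2 (hcyc2 c2 hc2B2)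
  have hRex : ∀ c, ∃ D, c ∈ D1 → D ⊆ B2 ∧ cycleSum D = c := by
    intro c
    by_cases h : c ∈ D1
    · obtain ⟨D, hD, hDc⟩ := hspan2 c (hcyc1 c (hD1sub h))
      exact ⟨D, fun _ => ⟨hD, hDc⟩⟩
    · exact ⟨∅, fun h' => absurd h' h⟩
  choose R hR using hRex
  have hRspec : ∀ c ∈ D1, R c ⊆ B2 ∧ cycleSum (R c) = c := fun c hc => hR c hc
  have hT := cycleSum_parity_rep D1 B2 R hRspec
  rw [hD1sum] at hT
  have hTeq : (B2.filter fun b => Odd ((D1.filter fun c => b ∈ R c).card)) = {c2} := by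
    apply rep_unique hind2 (Finset.filter_subset _ _) (by simpa using hc2B2)
    rw [hT, cycleSum_singleton]
  have hc2T : c2 ∈ (B2.filter fun b => Odd ((D1.filter fun c => b ∈ R c).card)) := by
    rw [hTeq]; exact Finset.mem_singleton_self _
  rw [Finset.mem_filter] at hc2T
  have hne : (D1.filter fun c => c2 ∈ R c).Nonempty := by
    rw [Finset.nonempty_iff_ne_empty]
    intro h0
    have := hc2T.2
    rw [h0] at this
    simp at this
  obtain ⟨c1, hc1mem⟩ := hne
  rw [Finset.mem_filter] at hc1mem
  obtain ⟨hc1D1, hc2Rc1⟩ := hc1mem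
  have hc1B1 : c1 ∈ B1 := hD1sub hc1D1
  have hRc1sub := (hRspec c1 hc1D1).1
  have hRc1sum := (hRspec c1 hc1D1).2
  have hc1nB2 : c1 ∉ B2 := by
    intro h
    have heq : R c1 = {c1} := rep_unique hind2 hRc1sub (by simpa using h)
      (by rw [hRc1sum, cycleSum_singleton])
    rw [heq, Finset.mem_singleton] at hc2Rc1
    exact hc2nB1 (hc2Rc1 ▸ hc1B1)
  have hle1 : c1.card ≤ c2.card :=
    hw1 c1 hc1B1 c2 (hcyc2 c2 hc2B2) hc2nB1 ⟨D1, hD1sub, hD1sum, hc1D1⟩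
  have hle2 : c2.card ≤ c1.card :=
    hw2 c2 hc2B2 c1 (hcyc1 c1 hc1B1) hc1nB2 ⟨R c1, hRc1sub, hRc1sum, hc2Rc1⟩
  have hcard : c1.card = c2.card := le_antisymm hle1 hle2
  have hBeq : B2 \ {c2} ∪ {c1} = insert c1 (B2.erase c2) := by
    rw [← Finset.erase_eq, Finset.union_comm, ← Finset.insert_eq]
  have hc1nE2 : c1 ∉ B2.erase c2 := fun h => hc1nB2 (Finset.mem_of_mem_erase h)
  refine ⟨c1, Finset.mem_sdiff.mpr ⟨hc1B1, hc1nB2⟩, ?_, ?_⟩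
  · rw [hBeq]
    refine ⟨?_, ?_, ?_⟩
    · intro b hb
      rcases Finset.mem_insert.mp hb with rfl | hb
      · exact hcyc1 _ hc1B1
      · exact hcyc2 _ (Finset.mem_of_mem_erase hb)
    · intro F hF hFne heq
      by_cases hc1F : c1 ∈ F
      · have hF'sub : F.erase c1 ⊆ B2.erase c2 := by
          intro x hx
          rcases Finset.mem_insert.mp (hF (Finset.mem_of_mem_erase hx)) with rfl | h
          · exact absurd rfl (Finset.ne_of_mem_erase hx)
          · exact h
        have hF'B2 : F.erase c1 ⊆ B2 := hF'sub.trans (Finset.erase_subset _ _)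
        have hsumF : ∑ b ∈ F, chi b = chi c1 + ∑ b ∈ F.erase c1, chi b :=
          (Finset.add_sum_erase _ _ hc1F).symm
        have h0 : ∑ b ∈ F, chi b = 0 := by rw [← chi_cycleSum, heq, chi_empty]
        have hF'c1 : ∑ b ∈ F.erase c1, chi b = chi c1 := by
          have h' : chi c1 + (chi c1 + ∑ b ∈ F.erase c1, chi b) = chi c1 + 0 := by
            rw [← hsumF, h0]
          rwa [← add_assoc, add_self_chi (chi c1), zero_add, add_zero] at h'
        have hFR : F.erase c1 = R c1 := by
          apply rep_unique hind2 hF'B2 hRc1sub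
          apply cycleSum_eq_iff.mpr
          rw [hF'c1, ← chi_cycleSum, hRc1sum]
        have hc2F' : c2 ∈ F.erase c1 := by rw [hFR]; exact hc2Rc1
        exact (Finset.ne_of_mem_erase (hF'sub hc2F')) rfl
      · have hFB2 : F ⊆ B2 := by
          intro x hx
          rcases Finset.mem_insert.mp (hF hx) with rfl | h
          · exact absurd hx hc1F
          · exact Finset.mem_of_mem_erase h
        exact hind2 F hFB2 hFne heq
    · intro c hc
      obtain ⟨E, hEsub, hEsum⟩ := hspan2 c hc
      by_cases hc2E : c2 ∈ E
      · have hSsub : (R c1).erase c2 ∆ E.erase c2 ⊆ B2.erase c2 := by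
          intro x hx
          rcases Finset.mem_symmDiff.mp hx with ⟨h1,_⟩|⟨h1,_⟩
          · exact Finset.erase_subset_erase _ hRc1sub h1
          · exact Finset.erase_subset_erase _ hEsub h1
        have hc1S : c1 ∉ (R c1).erase c2 ∆ E.erase c2 :=
          fun h => hc1nB2 (Finset.mem_of_mem_erase (hSsub h))
        refine ⟨insert c1 ((R c1).erase c2 ∆ E.erase c2),
          Finset.insert_subset_insert _ hSsub, ?_⟩
        apply chi_inj
        rw [chi_cycleSum, Finset.sum_insert hc1S, sum_symmDiff']
        have e1 : chi c1 = chi c2 + ∑ b ∈ (R c1).erase c2, chi b := by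
          conv_lhs => rw [← hRc1sum]
          rw [chi_cycleSum, ← Finset.add_sum_erase _ _ hc2Rc1]
        have e2 : chi c = chi c2 + ∑ b ∈ E.erase c2, chi b := by
          conv_lhs => rw [← hEsum]
          rw [chi_cycleSum, ← Finset.add_sum_erase _ _ hc2E]
        rw [e1, e2]
        have hss := add_self_chi (∑ b ∈ (R c1).erase c2, chi b)
        abel_nf
        rw [show (2:ℤ) • ∑ b ∈ (R c1).erase c2, chi b
            = ∑ b ∈ (R c1).erase c2, chi b + ∑ b ∈ (R c1).erase c2, chi b by rw [two_zsmul],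
          hss]
        abel
      · refine ⟨E, fun x hx => Finset.mem_insert_of_mem
          (Finset.mem_erase.mpr ⟨fun h => hc2E (h ▸ hx), hEsub hx⟩), hEsum⟩
  · rw [hBeq]
    simp only [weight]
    rw [Finset.sum_insert hc1nE2, hcard, Finset.add_sum_erase _ _ hc2B2]


end MCBI
end

section
/- Let G be a finite simple graph of maximum degree at most 3, and let s1 ≠ s2 be two distinct squares of G, neither of which lies in the linear span (over ℤ/2ℤ) of the triangles of G. If s1 and s2 share at least one vertex, then exactly one of the following holds: (i) s1 and s2 have exactly two vertices in common, these two vertices are joined by an edge belonging to both squares, and this is the unique common edge of s1 and s2; or (ii) s1 and s2 have exactly three vertices in common and exactly two common edges, these two edges forming a path through the three common vertices. -/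
namespace MCBI

variable {V : Type*} [Fintype V] [DecidableEq V]

section Lemmas
set_option linter.unusedSectionVars false
set_option maxHeartbeats 2000000

lemma edge_repr {G : SimpleGraph V} {e : Sym2 V} (h : e ∈ G.edgeSet) :
    ∃ a b, G.Adj a b ∧ e = s(a, b) := by
  induction e using Sym2.ind with
  | _ a b => exact ⟨a, b, h, rfl⟩

lemma edge_repr_mem {G : SimpleGraph V} {e : Sym2 V} (h : e ∈ G.edgeSet) {v : V} (hv : v ∈ e) :
    ∃ w, G.Adj v w ∧ e = s(v, w) := by
  induction e using Sym2.ind with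
  | _ a b =>
    rcases Sym2.mem_iff.1 hv with rfl | rfl
    · exact ⟨b, h, rfl⟩
    · exact ⟨a, SimpleGraph.adj_symm _ h, Sym2.eq_swap.symm⟩

lemma other_edge {s : Finset (Sym2 V)} {v : V}
    (hc : (s.filter (fun e => v ∈ e)).card = 2) {e : Sym2 V} (he : e ∈ s) (hv : v ∈ e) :
    ∃ f ∈ s, f ≠ e ∧ v ∈ f := by
  obtain ⟨f, hf, hfe⟩ := Finset.exists_mem_ne
    (s := s.filter (fun e => v ∈ e)) (by omega) e
  rw [Finset.mem_filter] at hf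
  exact ⟨f, hf.1, hfe, hf.2⟩

lemma filter_ge_three {s : Finset (Sym2 V)} {v : V}
    {e1 e2 e3 : Sym2 V} (h1 : e1 ∈ s) (h2 : e2 ∈ s) (h3 : e3 ∈ s)
    (h12 : e1 ≠ e2) (h13 : e1 ≠ e3) (h23 : e2 ≠ e3)
    (hv1 : v ∈ e1) (hv2 : v ∈ e2) (hv3 : v ∈ e3) :
    3 ≤ (s.filter (fun e => v ∈ e)).card := by
  have hsub : ({e1, e2, e3} : Finset (Sym2 V)) ⊆ s.filter (fun e => v ∈ e) := by
    intro x hx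
    simp only [Finset.mem_insert, Finset.mem_singleton] at hx
    rcases hx with rfl | rfl | rfl <;> exact Finset.mem_filter.2 ⟨by assumption, by assumption⟩
  calc 3 = ({e1, e2, e3} : Finset (Sym2 V)).card := by
        rw [Finset.card_insert_of_notMem (by simp [h12, h13]),
          Finset.card_insert_of_notMem (by simp [h23]), Finset.card_singleton]
    _ ≤ _ := Finset.card_le_card hsub

lemma sq_filter_two (G : SimpleGraph V) [DecidableRel G.Adj]
    (hdeg : ∀ v : V, G.degree v ≤ 3)
    {s : Finset (Sym2 V)} (hs : IsCycle G s)
    {v : V} (hv : ∃ e ∈ s, v ∈ e) : (s.filter (fun e => v ∈ e)).card = 2 := by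
  have he : Even (s.filter (fun e => v ∈ e)).card := hs.2 v
  have h1 : 1 ≤ (s.filter (fun e => v ∈ e)).card := by
    obtain ⟨e, he1, he2⟩ := hv
    exact Finset.card_pos.2 ⟨e, Finset.mem_filter.2 ⟨he1, he2⟩⟩
  have h3 : (s.filter (fun e => v ∈ e)).card ≤ 3 := by
    calc (s.filter (fun e => v ∈ e)).card ≤ (G.incidenceFinset v).card := by
          apply Finset.card_le_card
          intro e he
          rw [Finset.mem_filter] at he
          rw [SimpleGraph.mem_incidenceFinset]
          exact ⟨hs.1 he.1, he.2⟩
      _ = G.degree v := G.card_incidenceFinset_eq_degree v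
      _ ≤ 3 := hdeg v
  obtain ⟨m, hm⟩ := he
  omega

lemma shared_edge (G : SimpleGraph V) [DecidableRel G.Adj]
    (hdeg : ∀ v : V, G.degree v ≤ 3)
    {s1 s2 : Finset (Sym2 V)} (hs1 : IsCycle G s1) (hs2 : IsCycle G s2)
    {v : V} (hv1 : ∃ e ∈ s1, v ∈ e) (hv2 : ∃ e ∈ s2, v ∈ e) :
    ∃ e, e ∈ s1 ∧ e ∈ s2 ∧ v ∈ e := by
  set f1 := s1.filter (fun e => v ∈ e) with hf1
  set f2 := s2.filter (fun e => v ∈ e) with hf2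
  have c1 : f1.card = 2 := sq_filter_two G hdeg hs1 hv1
  have c2 : f2.card = 2 := sq_filter_two G hdeg hs2 hv2
  have hsub : f1 ∪ f2 ⊆ G.incidenceFinset v := by
    apply Finset.union_subset <;>
      · intro e he
        rw [hf1] at * <;> rw [hf2] at *
        rw [Finset.mem_filter] at he
        rw [SimpleGraph.mem_incidenceFinset]
        first
        | exact ⟨hs1.1 he.1, he.2⟩
        | exact ⟨hs2.1 he.1, he.2⟩
  have hle : (f1 ∪ f2).card ≤ 3 := by
    calc (f1 ∪ f2).card ≤ (G.incidenceFinset v).card := Finset.card_le_card hsub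
      _ = G.degree v := G.card_incidenceFinset_eq_degree v
      _ ≤ 3 := hdeg v
  have hint : (f1 ∩ f2).Nonempty := by
    rw [← Finset.card_pos]
    have := Finset.card_union_add_card_inter f1 f2
    omega
  obtain ⟨e, he⟩ := hint
  rw [Finset.mem_inter, hf1, hf2, Finset.mem_filter, Finset.mem_filter] at he
  exact ⟨e, he.1.1, he.2.1, he.1.2⟩

lemma mem_cycVerts {c : Finset (Sym2 V)} {v : V} :
    v ∈ cycVerts c ↔ ∃ e ∈ c, v ∈ e := by
  simp [cycVerts]

lemma commonVerts (G : SimpleGraph V) [DecidableRel G.Adj]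
    (hdeg : ∀ v : V, G.degree v ≤ 3)
    {s1 s2 : Finset (Sym2 V)} (hs1 : IsCycle G s1) (hs2 : IsCycle G s2) :
    cycVerts s1 ∩ cycVerts s2 = cycVerts (s1 ∩ s2) := by
  ext v
  rw [Finset.mem_inter, mem_cycVerts, mem_cycVerts, mem_cycVerts]
  constructor
  · rintro ⟨h1, h2⟩
    obtain ⟨e, he1, he2, hv⟩ := shared_edge G hdeg hs1 hs2 h1 h2
    exact ⟨e, Finset.mem_inter.2 ⟨he1, he2⟩, hv⟩
  · rintro ⟨e, he, hv⟩
    rw [Finset.mem_inter] at he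
    exact ⟨⟨e, he.1, hv⟩, ⟨e, he.2, hv⟩⟩

lemma cycVerts_single (u v : V) : cycVerts ({s(u, v)} : Finset (Sym2 V)) = {u, v} := by
  ext x
  simp [cycVerts, Sym2.mem_iff]

lemma cycVerts_path (u v w : V) :
    cycVerts ({s(u, v), s(v, w)} : Finset (Sym2 V)) = {u, v, w} := by
  ext x
  simp only [cycVerts, Finset.mem_filter, Finset.mem_univ, true_and, Finset.mem_insert,
    Finset.mem_singleton]
  constructor
  · rintro ⟨e, (rfl | rfl), he⟩ <;> rw [Sym2.mem_iff] at he <;> tauto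
  · rintro (rfl | rfl | rfl)
    · exact ⟨s(x, v), Or.inl rfl, Sym2.mem_mk_left x v⟩
    · exact ⟨s(u, x), Or.inl rfl, Sym2.mem_mk_right u x⟩
    · exact ⟨s(v, x), Or.inr rfl, Sym2.mem_mk_right v x⟩

lemma symmDiff_cycle {G : SimpleGraph V} {s1 s2 : Finset (Sym2 V)}
    (hs1 : IsCycle G s1) (hs2 : IsCycle G s2) :
    IsCycle G ((s1 \ s2) ∪ (s2 \ s1)) := by
  constructor
  · intro e he
    simp only [Finset.coe_union, Finset.coe_sdiff, Set.mem_union, Set.mem_diff,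
      Finset.mem_coe] at he
    rcases he with ⟨h, _⟩ | ⟨h, _⟩
    · exact hs1.1 h
    · exact hs2.1 h
  · intro v
    set A := s1.filter (fun e => v ∈ e) with hA
    set B := s2.filter (fun e => v ∈ e) with hB
    have hfe : ((s1 \ s2) ∪ (s2 \ s1)).filter (fun e => v ∈ e) = (A \ B) ∪ (B \ A) := by
      ext x
      simp only [hA, hB, Finset.mem_filter, Finset.mem_union, Finset.mem_sdiff]
      tauto
    rw [hfe]
    have hd : Disjoint (A \ B) (B \ A) := by
      rw [Finset.disjoint_left]
      intro x hx hx'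
      simp only [Finset.mem_sdiff] at hx hx'
      exact hx.2 hx'.1
    rw [Finset.card_union_of_disjoint hd]
    have h1 : (A \ B).card + (A ∩ B).card = A.card := Finset.card_sdiff_add_card_inter A B
    have h2 : (B \ A).card + (B ∩ A).card = B.card := Finset.card_sdiff_add_card_inter B A
    have h3 : (A ∩ B).card = (B ∩ A).card := by rw [Finset.inter_comm]
    obtain ⟨m, hm⟩ := hs1.2 v
    obtain ⟨n, hn⟩ := hs2.2 v
    rw [← hA] at hm
    rw [← hB] at hn
    exact ⟨m + n - (A ∩ B).card, by omega⟩

lemma no_small_cycle {G : SimpleGraph V} {d : Finset (Sym2 V)}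
    (hd : IsCycle G d) (h1 : d.Nonempty) (h2 : d.card ≤ 2) : False := by
  obtain ⟨e, he⟩ := h1
  obtain ⟨x, y, hxy, rfl⟩ := edge_repr (hd.1 he)
  have hfx := hd.2 x
  have hfy := hd.2 y
  have hex : s(x, y) ∈ d.filter (fun e => x ∈ e) :=
    Finset.mem_filter.2 ⟨he, Sym2.mem_mk_left x y⟩
  have hey : s(x, y) ∈ d.filter (fun e => y ∈ e) :=
    Finset.mem_filter.2 ⟨he, Sym2.mem_mk_right x y⟩
  have hcx : (d.filter (fun e => x ∈ e)).card = 2 := by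
    have hle := Finset.card_le_card (Finset.filter_subset (fun e => x ∈ e) d)
    have hpos := Finset.card_pos.2 ⟨_, hex⟩
    obtain ⟨m, hm⟩ := hfx
    omega
  have hcy : (d.filter (fun e => y ∈ e)).card = 2 := by
    have hle := Finset.card_le_card (Finset.filter_subset (fun e => y ∈ e) d)
    have hpos := Finset.card_pos.2 ⟨_, hey⟩
    obtain ⟨m, hm⟩ := hfy
    omega
  have hdx : d.filter (fun e => x ∈ e) = d :=
    Finset.eq_of_subset_of_card_le (Finset.filter_subset _ _) (by omega)
  have hdy : d.filter (fun e => y ∈ e) = d :=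
    Finset.eq_of_subset_of_card_le (Finset.filter_subset _ _) (by omega)
  have hcard : d.card = 2 := by
    have := Finset.card_le_card (Finset.filter_subset (fun e => x ∈ e) d)
    omega
  obtain ⟨f, hf, hfe⟩ := Finset.exists_mem_ne (s := d) (by omega) s(x, y)
  have hxf : x ∈ f := by
    have : f ∈ d.filter (fun e => x ∈ e) := by rw [hdx]; exact hf
    exact (Finset.mem_filter.1 this).2
  have hyf : y ∈ f := by
    have : f ∈ d.filter (fun e => y ∈ e) := by rw [hdy]; exact hf
    exact (Finset.mem_filter.1 this).2
  exact hfe ((Sym2.mem_and_mem_iff hxy.ne).1 ⟨hxf, hyf⟩)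

lemma inter_card_le_two {G : SimpleGraph V} {s1 s2 : Finset (Sym2 V)}
    (hs1 : IsCycle G s1) (hcard1 : s1.card = 4)
    (hs2 : IsCycle G s2) (hcard2 : s2.card = 4) (hne : s1 ≠ s2) :
    (s1 ∩ s2).card ≤ 2 := by
  by_contra h
  push_neg at h
  have hsub : s1 ∩ s2 ⊆ s1 := Finset.inter_subset_left
  have hle4 : (s1 ∩ s2).card ≤ 4 := le_trans (Finset.card_le_card hsub) (by omega)
  have h4 : (s1 ∩ s2).card ≠ 4 := by
    intro h4
    have heq : s1 ∩ s2 = s1 := Finset.eq_of_subset_of_card_le hsub (by omega)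
    have hsub2 : s1 ⊆ s2 := by rw [← heq]; exact Finset.inter_subset_right
    exact hne (Finset.eq_of_subset_of_card_le hsub2 (by omega))
  have h3 : (s1 ∩ s2).card = 3 := by omega
  have hc1 : (s1 \ s2).card = 1 := by
    have := Finset.card_sdiff_add_card_inter s1 s2
    omega
  have hc2 : (s2 \ s1).card = 1 := by
    have := Finset.card_sdiff_add_card_inter s2 s1
    rw [Finset.inter_comm] at this
    omega
  have hcd : ((s1 \ s2) ∪ (s2 \ s1)).card ≤ 2 :=
    le_trans (Finset.card_union_le _ _) (by omega)
  have hnonempty : ((s1 \ s2) ∪ (s2 \ s1)).Nonempty := by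
    obtain ⟨e, he⟩ := Finset.card_pos.1 (by omega : 0 < (s1 \ s2).card)
    exact ⟨e, Finset.mem_union_left _ he⟩
  exact no_small_cycle (symmDiff_cycle hs1 hs2) hnonempty hcd

lemma square_structure (G : SimpleGraph V) [DecidableRel G.Adj]
    (hdeg : ∀ v : V, G.degree v ≤ 3)
    {s : Finset (Sym2 V)} (hs : IsCycle G s) (hcard : s.card = 4) :
    ∃ a b c d : V, a ≠ b ∧ a ≠ c ∧ a ≠ d ∧ b ≠ c ∧ b ≠ d ∧ c ≠ d ∧
      s = {s(a, b), s(b, c), s(c, d), s(d, a)} := by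
  have hne : s.Nonempty := Finset.card_pos.1 (by omega)
  obtain ⟨e, he⟩ := hne
  obtain ⟨a, b, hab, rfl⟩ := edge_repr (hs.1 he)
  have hab' : a ≠ b := hab.ne
  have fb : (s.filter (fun e => b ∈ e)).card = 2 :=
    sq_filter_two G hdeg hs ⟨_, he, Sym2.mem_mk_right a b⟩
  obtain ⟨e', he', he'ne, hbe'⟩ := other_edge fb he (Sym2.mem_mk_right a b)
  obtain ⟨c, hbc, rfl⟩ := edge_repr_mem (hs.1 he') hbe'
  have hbc' : b ≠ c := hbc.ne
  have hac : a ≠ c := by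
    rintro rfl
    exact he'ne (by rw [Sym2.eq_swap])
  have fc : (s.filter (fun e => c ∈ e)).card = 2 :=
    sq_filter_two G hdeg hs ⟨_, he', Sym2.mem_mk_right b c⟩
  obtain ⟨e'', he'', he''ne, hce''⟩ := other_edge fc he' (Sym2.mem_mk_right b c)
  obtain ⟨d, hcd, rfl⟩ := edge_repr_mem (hs.1 he'') hce''
  have hcd' : c ≠ d := hcd.ne
  have he''ne1 : s(c, d) ≠ s(a, b) := by
    intro h
    rw [Sym2.eq_iff] at h
    rcases h with ⟨rfl, rfl⟩ | ⟨rfl, rfl⟩ <;> simp_all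
  have hbd : b ≠ d := by
    rintro rfl
    have : 3 ≤ (s.filter (fun e => b ∈ e)).card :=
      filter_ge_three he he' he'' (Ne.symm he'ne) (Ne.symm he''ne1) (Ne.symm he''ne)
        (Sym2.mem_mk_right a b) (Sym2.mem_mk_left b c) (Sym2.mem_mk_right c b)
    omega
  have htriple : ({s(a, b), s(b, c), s(c, d)} : Finset (Sym2 V)) ⊆ s := by
    intro x hx
    simp only [Finset.mem_insert, Finset.mem_singleton] at hx
    rcases hx with rfl | rfl | rfl <;> assumption
  have htcard : ({s(a, b), s(b, c), s(c, d)} : Finset (Sym2 V)).card = 3 := by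
    rw [Finset.card_insert_of_notMem (by simp [Ne.symm he'ne, Ne.symm he''ne1]),
      Finset.card_insert_of_notMem (by simp [Ne.symm he''ne]), Finset.card_singleton]
  have hdiff : (s \ {s(a, b), s(b, c), s(c, d)}).card = 1 := by
    rw [Finset.card_sdiff_of_subset htriple]; omega
  obtain ⟨f, hf⟩ := Finset.card_eq_one.1 hdiff
  have hfs : f ∈ s := by
    have : f ∈ s \ {s(a, b), s(b, c), s(c, d)} := by rw [hf]; exact Finset.mem_singleton_self f
    exact (Finset.mem_sdiff.1 this).1
  have hfnot : f ∉ ({s(a, b), s(b, c), s(c, d)} : Finset (Sym2 V)) := by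
    have : f ∈ s \ {s(a, b), s(b, c), s(c, d)} := by rw [hf]; exact Finset.mem_singleton_self f
    exact (Finset.mem_sdiff.1 this).2
  have hf1 : f ≠ s(a, b) := by intro h; apply hfnot; simp [h]
  have hf2 : f ≠ s(b, c) := by intro h; apply hfnot; simp [h]
  have hf3 : f ≠ s(c, d) := by intro h; apply hfnot; simp [h]
  have hqcard : ({s(a, b), s(b, c), s(c, d), f} : Finset (Sym2 V)).card = 4 := by
    rw [Finset.card_insert_of_notMem (by simp [Ne.symm he'ne, Ne.symm he''ne1, Ne.symm hf1]),
      Finset.card_insert_of_notMem (by simp [Ne.symm he''ne, Ne.symm hf2]),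
      Finset.card_insert_of_notMem (by simp [Ne.symm hf3]), Finset.card_singleton]
  have hseq : s = {s(a, b), s(b, c), s(c, d), f} := by
    refine (Finset.eq_of_subset_of_card_le ?_ ?_).symm
    · intro x hx
      simp only [Finset.mem_insert, Finset.mem_singleton] at hx
      rcases hx with rfl | rfl | rfl | rfl <;> assumption
    · omega
  have had : a ≠ d := by
    rintro rfl
    have hafilter : (s.filter (fun e => a ∈ e)).card = 2 :=
      sq_filter_two G hdeg hs ⟨_, he, Sym2.mem_mk_left a b⟩
    have haf : a ∉ f := by
      intro haf
      have : 3 ≤ (s.filter (fun e => a ∈ e)).card :=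
        filter_ge_three he he'' hfs he''ne1.symm (Ne.symm hf1) (Ne.symm hf3)
          (Sym2.mem_mk_left a b) (Sym2.mem_mk_right c a) haf
      omega
    have hbf : b ∉ f := by
      intro hbf
      have : 3 ≤ (s.filter (fun e => b ∈ e)).card :=
        filter_ge_three he he' hfs (Ne.symm he'ne) (Ne.symm hf1) (Ne.symm hf2)
          (Sym2.mem_mk_right a b) (Sym2.mem_mk_left b c) hbf
      omega
    have hcf : c ∉ f := by
      intro hcf
      have : 3 ≤ (s.filter (fun e => c ∈ e)).card :=
        filter_ge_three he' he'' hfs he''ne.symm (Ne.symm hf2) (Ne.symm hf3)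
          (Sym2.mem_mk_right b c) (Sym2.mem_mk_left c a) hcf
      omega
    obtain ⟨x, y, hxy, rfl⟩ := edge_repr (hs.1 hfs)
    have hxfilter : (s.filter (fun e => x ∈ e)).card = 2 :=
      sq_filter_two G hdeg hs ⟨_, hfs, Sym2.mem_mk_left x y⟩
    obtain ⟨g, hgs, hgne, hxg⟩ := other_edge hxfilter hfs (Sym2.mem_mk_left x y)
    have hxa : x ≠ a := fun h => haf (h ▸ Sym2.mem_mk_left x y)
    have hxb : x ≠ b := fun h => hbf (h ▸ Sym2.mem_mk_left x y)
    have hxc : x ≠ c := fun h => hcf (h ▸ Sym2.mem_mk_left x y)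
    have hg4 : g ∈ ({s(a, b), s(b, c), s(c, a), s(x, y)} : Finset (Sym2 V)) := hseq ▸ hgs
    simp only [Finset.mem_insert, Finset.mem_singleton] at hg4
    rcases hg4 with rfl | rfl | rfl | rfl
    · rcases Sym2.mem_iff.1 hxg with h | h <;> [exact hxa h; exact hxb h]
    · rcases Sym2.mem_iff.1 hxg with h | h <;> [exact hxb h; exact hxc h]
    · rcases Sym2.mem_iff.1 hxg with h | h <;> [exact hxc h; exact hxa h]
    · exact hgne rfl
  have hafilter : (s.filter (fun e => a ∈ e)).card = 2 :=
    sq_filter_two G hdeg hs ⟨_, he, Sym2.mem_mk_left a b⟩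
  obtain ⟨g, hgs, hgne, hag⟩ := other_edge hafilter he (Sym2.mem_mk_left a b)
  have haf : a ∈ f := by
    have hg4 : g ∈ ({s(a, b), s(b, c), s(c, d), f} : Finset (Sym2 V)) := hseq ▸ hgs
    simp only [Finset.mem_insert, Finset.mem_singleton] at hg4
    rcases hg4 with rfl | rfl | rfl | rfl
    · exact absurd rfl hgne
    · rcases Sym2.mem_iff.1 hag with h | h <;> [exact absurd h hab'; exact absurd h hac]
    · rcases Sym2.mem_iff.1 hag with h | h <;> [exact absurd h hac; exact absurd h had]
    · exact hag
  have hdfilter : (s.filter (fun e => d ∈ e)).card = 2 :=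
    sq_filter_two G hdeg hs ⟨_, he'', Sym2.mem_mk_right c d⟩
  obtain ⟨g', hgs', hgne', hdg⟩ := other_edge hdfilter he'' (Sym2.mem_mk_right c d)
  have hdf : d ∈ f := by
    have hg4 : g' ∈ ({s(a, b), s(b, c), s(c, d), f} : Finset (Sym2 V)) := hseq ▸ hgs'
    simp only [Finset.mem_insert, Finset.mem_singleton] at hg4
    rcases hg4 with rfl | rfl | rfl | rfl
    · rcases Sym2.mem_iff.1 hdg with h | h <;>
        [exact absurd h.symm had; exact absurd h.symm hbd]
    · rcases Sym2.mem_iff.1 hdg with h | h <;>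
        [exact absurd h.symm hbd; exact absurd h.symm hcd']
    · exact absurd rfl hgne'
    · exact hdg
  have hfeq : f = s(d, a) := (Sym2.mem_and_mem_iff (Ne.symm had)).1 ⟨hdf, haf⟩
  refine ⟨a, b, c, d, hab', hac, had, hbc', hbd, hcd', ?_⟩
  rw [hseq, hfeq]

lemma triangle_card {a b c : V} (hab : a ≠ b) (hbc : b ≠ c) (hac : a ≠ c) :
    ({s(a, b), s(b, c), s(c, a)} : Finset (Sym2 V)).card = 3 := by
  rw [Finset.card_insert_of_notMem, Finset.card_insert_of_notMem, Finset.card_singleton]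
  · simp only [Finset.mem_singleton, Sym2.eq_iff]
    tauto
  · simp only [Finset.mem_insert, Finset.mem_singleton, Sym2.eq_iff]
    tauto

lemma triangle_cycle {G : SimpleGraph V} {a b c : V}
    (hab : G.Adj a b) (hbc : G.Adj b c) (hca : G.Adj c a) :
    IsCycle G {s(a, b), s(b, c), s(c, a)} := by
  have hab' : a ≠ b := hab.ne
  have hbc' : b ≠ c := hbc.ne
  have hca' : c ≠ a := hca.ne
  constructor
  · intro e he
    simp only [Finset.coe_insert, Finset.coe_singleton, Set.mem_insert_iff,
      Set.mem_singleton_iff] at he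
    rcases he with rfl | rfl | rfl
    · exact hab
    · exact hbc
    · exact hca
  · intro v
    rcases eq_or_ne v a with rfl | hva
    · have h : ({s(v, b), s(b, c), s(c, v)} : Finset (Sym2 V)).filter (fun e => v ∈ e)
          = {s(v, b), s(c, v)} := by
        rw [Finset.filter_insert, if_pos (Sym2.mem_mk_left v b), Finset.filter_insert,
          if_neg (by simp only [Sym2.mem_iff]; tauto), Finset.filter_singleton,
          if_pos (Sym2.mem_mk_right c v)]
      rw [h, Finset.card_pair (by rw [Ne, Sym2.eq_iff]; tauto)]
      exact even_two
    rcases eq_or_ne v b with rfl | hvb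
    · have h : ({s(a, v), s(v, c), s(c, a)} : Finset (Sym2 V)).filter (fun e => v ∈ e)
          = {s(a, v), s(v, c)} := by
        rw [Finset.filter_insert, if_pos (Sym2.mem_mk_right a v), Finset.filter_insert,
          if_pos (Sym2.mem_mk_left v c), Finset.filter_singleton,
          if_neg (by simp only [Sym2.mem_iff]; tauto)]
        rfl
      rw [h, Finset.card_pair (by rw [Ne, Sym2.eq_iff]; tauto)]
      exact even_two
    rcases eq_or_ne v c with rfl | hvc
    · have h : ({s(a, b), s(b, v), s(v, a)} : Finset (Sym2 V)).filter (fun e => v ∈ e)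
          = {s(b, v), s(v, a)} := by
        rw [Finset.filter_insert, if_neg (by simp only [Sym2.mem_iff]; tauto),
          Finset.filter_insert, if_pos (Sym2.mem_mk_right b v), Finset.filter_singleton,
          if_pos (Sym2.mem_mk_left v a)]
      rw [h, Finset.card_pair (by rw [Ne, Sym2.eq_iff]; tauto)]
      exact even_two
    · have h : ({s(a, b), s(b, c), s(c, a)} : Finset (Sym2 V)).filter (fun e => v ∈ e)
          = ∅ := by
        rw [Finset.filter_insert, if_neg (by simp only [Sym2.mem_iff]; tauto),
          Finset.filter_insert, if_neg (by simp only [Sym2.mem_iff]; tauto),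
          Finset.filter_singleton, if_neg (by simp only [Sym2.mem_iff]; tauto)]
      rw [h]
      exact Even.zero

lemma cycleSum_pair {T1 T2 : Finset (Sym2 V)} (h : T1 ≠ T2) :
    cycleSum {T1, T2} = (T1 \ T2) ∪ (T2 \ T1) := by
  ext e
  simp only [cycleSum, Finset.mem_filter, Finset.mem_univ, true_and, Finset.mem_union,
    Finset.mem_sdiff]
  by_cases h1 : e ∈ T1 <;> by_cases h2 : e ∈ T2
  · have hf : ({T1, T2} : Finset (Finset (Sym2 V))).filter (fun c => e ∈ c) = {T1, T2} := by
      rw [Finset.filter_insert, if_pos h1, Finset.filter_singleton, if_pos h2]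
    rw [hf, Finset.card_pair h]
    simp [h1, h2]
  · have hf : ({T1, T2} : Finset (Finset (Sym2 V))).filter (fun c => e ∈ c) = {T1} := by
      rw [Finset.filter_insert, if_pos h1, Finset.filter_singleton, if_neg h2]
      rfl
    rw [hf, Finset.card_singleton]
    simp [h1, h2]
  · have hf : ({T1, T2} : Finset (Finset (Sym2 V))).filter (fun c => e ∈ c) = {T2} := by
      rw [Finset.filter_insert, if_neg h1, Finset.filter_singleton, if_pos h2]
    rw [hf, Finset.card_singleton]
    simp [h1, h2]
  · have hf : ({T1, T2} : Finset (Finset (Sym2 V))).filter (fun c => e ∈ c) = ∅ := by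
      rw [Finset.filter_insert, if_neg h1, Finset.filter_singleton, if_neg h2]
    rw [hf]
    simp [h1, h2]

lemma opposite_contra (G : SimpleGraph V) [DecidableRel G.Adj]
    (hdeg : ∀ v : V, G.degree v ≤ 3)
    {s1 s2 : Finset (Sym2 V)} (hs1 : IsCycle G s1) (hs2 : IsCycle G s2) (hcard2 : s2.card = 4)
    {a b c d : V}
    (hab : a ≠ b) (hac : a ≠ c) (had : a ≠ d) (hbc : b ≠ c) (hbd : b ≠ d) (hcd : c ≠ d)
    (hseq : s1 = {s(a, b), s(b, c), s(c, d), s(d, a)})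
    (hint : s1 ∩ s2 = {s(a, b), s(c, d)})
    (hsp2 : ¬ InSpan {t : Finset (Sym2 V) | IsCycle G t ∧ t.card = 3} s2) : False := by
  have hba := hab.symm
  have hca := hac.symm
  have hda := had.symm
  have hcb := hbc.symm
  have hdb := hbd.symm
  have hdc := hcd.symm
  have hABi : s(a, b) ∈ s1 ∩ s2 := by rw [hint]; exact Finset.mem_insert_self _ _
  have hCDi : s(c, d) ∈ s1 ∩ s2 := by
    rw [hint]; exact Finset.mem_insert_of_mem (Finset.mem_singleton_self _)
  have hAB2 : s(a, b) ∈ s2 := Finset.mem_of_mem_inter_right hABi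
  have hCD2 : s(c, d) ∈ s2 := Finset.mem_of_mem_inter_right hCDi
  -- second edge of s2 at b
  have fb : (s2.filter (fun e => b ∈ e)).card = 2 :=
    sq_filter_two G hdeg hs2 ⟨_, hAB2, Sym2.mem_mk_right a b⟩
  obtain ⟨g, hg2, hgne, hbg⟩ := other_edge fb hAB2 (Sym2.mem_mk_right a b)
  obtain ⟨x, hbx, rfl⟩ := edge_repr_mem (hs2.1 hg2) hbg
  have hxa : x ≠ a := by
    rintro rfl
    exact hgne (by rw [Sym2.eq_swap])
  have hg1 : s(b, x) ∉ s1 := by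
    intro h
    have hmem : s(b, x) ∈ s1 ∩ s2 := Finset.mem_inter.2 ⟨h, hg2⟩
    rw [hint] at hmem
    simp only [Finset.mem_insert, Finset.mem_singleton, Sym2.eq_iff] at hmem
    tauto
  -- second edge of s2 at c
  have fc : (s2.filter (fun e => c ∈ e)).card = 2 :=
    sq_filter_two G hdeg hs2 ⟨_, hCD2, Sym2.mem_mk_left c d⟩
  obtain ⟨h', hh2, hhne, hch⟩ := other_edge fc hCD2 (Sym2.mem_mk_left c d)
  obtain ⟨y, hcy, rfl⟩ := edge_repr_mem (hs2.1 hh2) hch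
  have hyd : y ≠ d := by
    rintro rfl
    exact hhne rfl
  have hh1 : s(c, y) ∉ s1 := by
    intro h
    have hmem : s(c, y) ∈ s1 ∩ s2 := Finset.mem_inter.2 ⟨h, hh2⟩
    rw [hint] at hmem
    simp only [Finset.mem_insert, Finset.mem_singleton, Sym2.eq_iff] at hmem
    tauto
  -- the four edges of s2 are distinct
  have hABCD : s(a, b) ≠ s(c, d) := by rw [Ne, Sym2.eq_iff]; tauto
  have hgh : s(b, x) ≠ s(c, y) := by
    intro h
    rw [Sym2.eq_iff] at h
    rcases h with ⟨rfl, rfl⟩ | ⟨rfl, rfl⟩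
    · exact hbc rfl
    · exact hg1 (by rw [hseq, Sym2.eq_swap]; simp)
  have hABg : s(a, b) ≠ s(b, x) := Ne.symm hgne
  have hCDh : s(c, d) ≠ s(c, y) := Ne.symm hhne
  have hABh : s(a, b) ≠ s(c, y) := by
    intro h
    rw [Sym2.eq_iff] at h
    rcases h with ⟨rfl, rfl⟩ | ⟨rfl, rfl⟩
    · exact hac rfl
    · exact hh1 (by rw [hseq, Sym2.eq_swap]; simp)
  have hCDg : s(c, d) ≠ s(b, x) := by
    intro h
    exact hg1 (h ▸ (by rw [hseq]; simp))
  have hqcard : ({s(a, b), s(c, d), s(b, x), s(c, y)} : Finset (Sym2 V)).card = 4 := by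
    rw [Finset.card_insert_of_notMem (by simp [hABCD, hABg, hABh]),
      Finset.card_insert_of_notMem (by simp [hCDg, hCDh]),
      Finset.card_insert_of_notMem (by simp [hgh]), Finset.card_singleton]
  have hs2eq : s2 = {s(a, b), s(c, d), s(b, x), s(c, y)} := by
    refine (Finset.eq_of_subset_of_card_le ?_ ?_).symm
    · intro e he
      simp only [Finset.mem_insert, Finset.mem_singleton] at he
      rcases he with rfl | rfl | rfl | rfl <;> assumption
    · omega
  -- second edge of s2 at a pins down y = a
  have fa : (s2.filter (fun e => a ∈ e)).card = 2 :=
    sq_filter_two G hdeg hs2 ⟨_, hAB2, Sym2.mem_mk_left a b⟩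
  obtain ⟨k, hk2, hkne, hak⟩ := other_edge fa hAB2 (Sym2.mem_mk_left a b)
  have hk4 : k ∈ ({s(a, b), s(c, d), s(b, x), s(c, y)} : Finset (Sym2 V)) := hs2eq ▸ hk2
  simp only [Finset.mem_insert, Finset.mem_singleton] at hk4
  have hya : y = a := by
    rcases hk4 with rfl | rfl | rfl | rfl
    · exact absurd rfl hkne
    · rcases Sym2.mem_iff.1 hak with h | h <;> [exact absurd h hac; exact absurd h had]
    · rcases Sym2.mem_iff.1 hak with h | h <;> [exact absurd h hab; exact absurd h.symm hxa]
    · rcases Sym2.mem_iff.1 hak with h | h <;> [exact absurd h hac; exact h.symm]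
  subst y
  -- second edge of s2 at d pins down x = d
  have fd : (s2.filter (fun e => d ∈ e)).card = 2 :=
    sq_filter_two G hdeg hs2 ⟨_, hCD2, Sym2.mem_mk_right c d⟩
  obtain ⟨k', hk2', hkne', hdk⟩ := other_edge fd hCD2 (Sym2.mem_mk_right c d)
  have hk4' : k' ∈ ({s(a, b), s(c, d), s(b, x), s(c, a)} : Finset (Sym2 V)) := hs2eq ▸ hk2'
  simp only [Finset.mem_insert, Finset.mem_singleton] at hk4'
  have hxd : x = d := by
    rcases hk4' with rfl | rfl | rfl | rfl
    · rcases Sym2.mem_iff.1 hdk with h | h <;> [exact absurd h.symm had; exact absurd h.symm hbd]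
    · exact absurd rfl hkne'
    · rcases Sym2.mem_iff.1 hdk with h | h <;> [exact absurd h.symm hbd; exact h.symm]
    · rcases Sym2.mem_iff.1 hdk with h | h <;> [exact absurd h.symm hcd; exact absurd h.symm had]
  subst x
  -- adjacencies
  have hAdjAB : G.Adj a b := hs2.1 hAB2
  have hAdjCD : G.Adj c d := hs2.1 hCD2
  have hAdjBD : G.Adj b d := hbx
  have hAdjCA : G.Adj c a := hcy
  have hAdjDA : G.Adj d a := by
    have : s(d, a) ∈ s1 := by rw [hseq]; simp
    exact hs1.1 this
  -- the two triangles
  set T1 : Finset (Sym2 V) := {s(a, b), s(b, d), s(d, a)} with hT1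
  set T2 : Finset (Sym2 V) := {s(c, d), s(d, a), s(a, c)} with hT2
  have hT1cyc : IsCycle G T1 := triangle_cycle hAdjAB hAdjBD hAdjDA
  have hT2cyc : IsCycle G T2 := triangle_cycle hAdjCD hAdjDA hAdjCA.symm
  have hT1card : T1.card = 3 := triangle_card hab hbd had
  have hT2card : T2.card = 3 := triangle_card hcd hda hca
  have hT1T2 : T1 ≠ T2 := by
    intro h
    have : s(a, b) ∈ T2 := h ▸ (by rw [hT1]; simp)
    rw [hT2] at this
    simp only [Finset.mem_insert, Finset.mem_singleton, Sym2.eq_iff] at this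
    tauto
  apply hsp2
  refine ⟨{T1, T2}, ?_, ?_⟩
  · intro t ht
    simp only [Finset.coe_insert, Finset.coe_singleton, Set.mem_insert_iff,
      Set.mem_singleton_iff] at ht
    rcases ht with rfl | rfl
    · exact ⟨hT1cyc, hT1card⟩
    · exact ⟨hT2cyc, hT2card⟩
  · rw [cycleSum_pair hT1T2, hs2eq, (Sym2.eq_swap : s(c, a) = s(a, c)), hT1, hT2]
    have n1 : s(a, b) ≠ s(c, d) := hABCD
    have n2 : s(a, b) ≠ s(d, a) := by rw [Ne, Sym2.eq_iff]; tauto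
    have n3 : s(a, b) ≠ s(a, c) := by rw [Ne, Sym2.eq_iff]; tauto
    have n4 : s(b, d) ≠ s(c, d) := by rw [Ne, Sym2.eq_iff]; tauto
    have n5 : s(b, d) ≠ s(d, a) := by rw [Ne, Sym2.eq_iff]; tauto
    have n6 : s(b, d) ≠ s(a, c) := by rw [Ne, Sym2.eq_iff]; tauto
    have n7 : s(d, a) ≠ s(c, d) := by rw [Ne, Sym2.eq_iff]; tauto
    have n8 : s(d, a) ≠ s(a, c) := by rw [Ne, Sym2.eq_iff]; tauto
    have e1 : ({s(a, b), s(b, d), s(d, a)} : Finset (Sym2 V)) \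
        ({s(c, d), s(d, a), s(a, c)} : Finset (Sym2 V)) = {s(a, b), s(b, d)} := by
      ext z
      simp only [Finset.mem_sdiff, Finset.mem_insert, Finset.mem_singleton]
      constructor
      · rintro ⟨rfl | rfl | rfl, hn⟩
        · exact Or.inl rfl
        · exact Or.inr rfl
        · exact absurd (Or.inr (Or.inl rfl)) hn
      · rintro (rfl | rfl)
        · exact ⟨Or.inl rfl, by rintro (h | h | h); exacts [n1 h, n2 h, n3 h]⟩
        · exact ⟨Or.inr (Or.inl rfl), by rintro (h | h | h); exacts [n4 h, n5 h, n6 h]⟩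
    have e2 : ({s(c, d), s(d, a), s(a, c)} : Finset (Sym2 V)) \
        ({s(a, b), s(b, d), s(d, a)} : Finset (Sym2 V)) = {s(c, d), s(a, c)} := by
      ext z
      simp only [Finset.mem_sdiff, Finset.mem_insert, Finset.mem_singleton]
      constructor
      · rintro ⟨rfl | rfl | rfl, hn⟩
        · exact Or.inl rfl
        · exact absurd (Or.inr (Or.inr rfl)) hn
        · exact Or.inr rfl
      · rintro (rfl | rfl)
        · exact ⟨Or.inl rfl,
            by rintro (h | h | h); exacts [n1 h.symm, n4 h.symm, n7 h.symm]⟩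
        · exact ⟨Or.inr (Or.inr rfl),
            by rintro (h | h | h); exacts [n3 h.symm, n6 h.symm, n8 h.symm]⟩
    rw [e1, e2]
    ext z
    simp only [Finset.mem_union, Finset.mem_insert, Finset.mem_singleton]
    constructor
    · rintro ((rfl | rfl) | (rfl | rfl))
      · exact Or.inl rfl
      · exact Or.inr (Or.inr (Or.inl rfl))
      · exact Or.inr (Or.inl rfl)
      · exact Or.inr (Or.inr (Or.inr rfl))
    · rintro (rfl | rfl | rfl | rfl)
      · exact Or.inl (Or.inl rfl)
      · exact Or.inr (Or.inl rfl)
      · exact Or.inl (Or.inr rfl)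
      · exact Or.inr (Or.inr rfl)

end Lemmas

section MainHelpers
set_option linter.unusedSectionVars false
set_option maxHeartbeats 2000000

variable {s1 s2 : Finset (Sym2 V)}

lemma case_i (G : SimpleGraph V) [DecidableRel G.Adj]
    (hdeg : ∀ v : V, G.degree v ≤ 3)
    {u v : V} (huv : u ≠ v)
    (hE : s1 ∩ s2 = {s(u, v)})
    (hcv : cycVerts s1 ∩ cycVerts s2 = cycVerts (s1 ∩ s2)) :
    Xor'
      (∃ u v : V, u ≠ v ∧ cycVerts s1 ∩ cycVerts s2 = {u, v} ∧ s1 ∩ s2 = {s(u, v)})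
      (∃ u v w : V, u ≠ v ∧ v ≠ w ∧ u ≠ w ∧
        cycVerts s1 ∩ cycVerts s2 = {u, v, w} ∧ s1 ∩ s2 = {s(u, v), s(v, w)}) := by
  refine Or.inl ⟨⟨u, v, huv, ?_, hE⟩, ?_⟩
  · rw [hcv, hE, cycVerts_single]
  · rintro ⟨u', v', w', hu'v', hv'w', hu'w', hverts, hinter⟩
    have hc2 : (s1 ∩ s2).card = 2 := by
      rw [hinter]
      exact Finset.card_pair (by rw [Ne, Sym2.eq_iff]; tauto)
    rw [hE, Finset.card_singleton] at hc2
    omega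

lemma case_ii (G : SimpleGraph V) [DecidableRel G.Adj]
    (hdeg : ∀ v : V, G.degree v ≤ 3)
    {u v w : V} (huv : u ≠ v) (hvw : v ≠ w) (huw : u ≠ w)
    (hE : s1 ∩ s2 = {s(u, v), s(v, w)})
    (hcv : cycVerts s1 ∩ cycVerts s2 = cycVerts (s1 ∩ s2)) :
    Xor'
      (∃ u v : V, u ≠ v ∧ cycVerts s1 ∩ cycVerts s2 = {u, v} ∧ s1 ∩ s2 = {s(u, v)})
      (∃ u v w : V, u ≠ v ∧ v ≠ w ∧ u ≠ w ∧
        cycVerts s1 ∩ cycVerts s2 = {u, v, w} ∧ s1 ∩ s2 = {s(u, v), s(v, w)}) := by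
  have hc2 : (s1 ∩ s2).card = 2 := by
    rw [hE]
    exact Finset.card_pair (by rw [Ne, Sym2.eq_iff]; tauto)
  refine Or.inr ⟨⟨u, v, w, huv, hvw, huw, ?_, hE⟩, ?_⟩
  · rw [hcv, hE, cycVerts_path]
  · rintro ⟨u', v', hu'v', hverts, hinter⟩
    rw [hinter, Finset.card_singleton] at hc2
    omega

end MainHelpers

set_option maxHeartbeats 2000000 in
/-- In a graph of maximum degree at most `3`, two distinct intersecting
squares, neither spanned by triangles, intersect in exactly one of the two ways:
(i) two common vertices joined by the unique common edge; (ii) three common vertices and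
exactly two common edges forming a path through them. -/
theorem squares_intersection (G : SimpleGraph V) [DecidableRel G.Adj]
    (hdeg : ∀ v : V, G.degree v ≤ 3)
    (s1 s2 : Finset (Sym2 V))
    (hs1 : IsCycle G s1) (hcard1 : s1.card = 4)
    (hs2 : IsCycle G s2) (hcard2 : s2.card = 4)
    (hne : s1 ≠ s2)
    (hsp1 : ¬ InSpan {t : Finset (Sym2 V) | IsCycle G t ∧ t.card = 3} s1)
    (hsp2 : ¬ InSpan {t : Finset (Sym2 V) | IsCycle G t ∧ t.card = 3} s2)
    (hmeet : (cycVerts s1 ∩ cycVerts s2).Nonempty) :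
    Xor'
      (∃ u v : V, u ≠ v ∧ cycVerts s1 ∩ cycVerts s2 = {u, v} ∧ s1 ∩ s2 = {s(u, v)})
      (∃ u v w : V, u ≠ v ∧ v ≠ w ∧ u ≠ w ∧
        cycVerts s1 ∩ cycVerts s2 = {u, v, w} ∧ s1 ∩ s2 = {s(u, v), s(v, w)}) := by
  classical
  -- structure of s1
  obtain ⟨a, b, c, d, hab, hac, had, hbc, hbd, hcd, hseq⟩ := square_structure G hdeg hs1 hcard1
  have hcv : cycVerts s1 ∩ cycVerts s2 = cycVerts (s1 ∩ s2) :=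
    commonVerts G hdeg hs1 hs2
  have hge1 : 1 ≤ (s1 ∩ s2).card := by
    obtain ⟨v, hv⟩ := hmeet
    rw [Finset.mem_inter, mem_cycVerts, mem_cycVerts] at hv
    obtain ⟨e, he1, he2, hve⟩ := shared_edge G hdeg hs1 hs2 hv.1 hv.2
    exact Finset.card_pos.2 ⟨e, Finset.mem_inter.2 ⟨he1, he2⟩⟩
  have hle2 : (s1 ∩ s2).card ≤ 2 := inter_card_le_two hs1 hcard1 hs2 hcard2 hne
  rcases (by omega : (s1 ∩ s2).card = 1 ∨ (s1 ∩ s2).card = 2) with h1 | h2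
  · -- one common edge
    obtain ⟨e, hE⟩ := Finset.card_eq_one.1 h1
    have he1 : e ∈ s1 := by
      have : e ∈ s1 ∩ s2 := by rw [hE]; exact Finset.mem_singleton_self e
      exact Finset.mem_of_mem_inter_left this
    rw [hseq] at he1
    simp only [Finset.mem_insert, Finset.mem_singleton] at he1
    rcases he1 with rfl | rfl | rfl | rfl
    · exact case_i G hdeg hab (by rw [hE]) hcv
    · exact case_i G hdeg hbc (by rw [hE]) hcv
    · exact case_i G hdeg hcd (by rw [hE]) hcv
    · exact case_i G hdeg (Ne.symm had) (by rw [hE]) hcv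
  · -- two common edges
    obtain ⟨e, f, hef, hEF⟩ := Finset.card_eq_two.1 h2
    have hrot : s1 = {s(b, c), s(c, d), s(d, a), s(a, b)} := by
      rw [hseq]; ext x
      simp only [Finset.mem_insert, Finset.mem_singleton]
      tauto
    have he1 : e ∈ s1 := by
      have : e ∈ s1 ∩ s2 := by rw [hEF]; exact Finset.mem_insert_self e {f}
      exact Finset.mem_of_mem_inter_left this
    have hf1 : f ∈ s1 := by
      have : f ∈ s1 ∩ s2 := by
        rw [hEF]; exact Finset.mem_insert_of_mem (Finset.mem_singleton_self f)
      exact Finset.mem_of_mem_inter_left this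
    rw [hseq] at he1 hf1
    simp only [Finset.mem_insert, Finset.mem_singleton] at he1 hf1
    rcases he1 with rfl | rfl | rfl | rfl <;> rcases hf1 with rfl | rfl | rfl | rfl
    · exact absurd rfl hef
    · exact case_ii G hdeg hab hbc hac (by rw [hEF]) hcv
    · exact absurd (opposite_contra G hdeg hs1 hs2 hcard2 hab hac had hbc hbd hcd hseq
        (by rw [hEF]) hsp2) not_false
    · exact case_ii G hdeg (Ne.symm had) hab hbd.symm
        (by rw [hEF, Finset.pair_comm]) hcv
    · exact case_ii G hdeg hab hbc hac (by rw [hEF, Finset.pair_comm]) hcv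
    · exact absurd rfl hef
    · exact case_ii G hdeg hbc hcd hbd (by rw [hEF]) hcv
    · exact absurd (opposite_contra G hdeg hs1 hs2 hcard2 hbc hbd (Ne.symm hab) hcd
        (Ne.symm hac) (Ne.symm had) hrot (by rw [hEF]) hsp2) not_false
    · exact absurd (opposite_contra G hdeg hs1 hs2 hcard2 hab hac had hbc hbd hcd hseq
        (by rw [hEF, Finset.pair_comm]) hsp2) not_false
    · exact case_ii G hdeg hbc hcd hbd (by rw [hEF, Finset.pair_comm]) hcv
    · exact absurd rfl hef
    · exact case_ii G hdeg hcd (Ne.symm had) (Ne.symm hac) (by rw [hEF]) hcv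
    · exact case_ii G hdeg (Ne.symm had) hab hbd.symm (by rw [hEF]) hcv
    · exact absurd (opposite_contra G hdeg hs1 hs2 hcard2 hbc hbd (Ne.symm hab) hcd
        (Ne.symm hac) (Ne.symm had) hrot (by rw [hEF, Finset.pair_comm]) hsp2) not_false
    · exact case_ii G hdeg hcd (Ne.symm had) (Ne.symm hac)
        (by rw [hEF, Finset.pair_comm]) hcv
    · exact absurd rfl hef

end MCBI
end

section
/- Let G be a finite simple graph of maximum degree at most 3 and let C be a nonempty finite set of squares of G, none of which lies in the linear span (over ℤ/2ℤ) of the triangles of G, such that ⊕_{s ∈ C} s lies in the span of the triangles of G, while for every nonempty proper subset D ⊊ C the sum ⊕_{s ∈ D} s does not lie in the span of the triangles of G. Then the union of the edge sets of the squares in C forms a connected subgraph of G. -/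
namespace MCBI

section

variable {V : Type*}

def IsEdgeClosed (E : Finset (Sym2 V)) (A : Set V) : Prop :=
  ∀ e ∈ E, ∀ p ∈ e, ∀ q ∈ e, p ∈ A → q ∈ A

lemma IsEdgeClosed.mono {E F : Finset (Sym2 V)} {A : Set V} (hF : IsEdgeClosed F A)
    (hEF : E ⊆ F) : IsEdgeClosed E A :=
  fun e he => hF e (hEF he)

variable [DecidableEq V]

lemma exists_isEdgeClosed_of_not_edgesConnected {E : Finset (Sym2 V)} (hE : E.Nonempty)
    (hdisc : ¬ EdgesConnected E) :
    ∃ A : Set V, IsEdgeClosed E A ∧ (∀ v ∈ A, ∃ e ∈ E, v ∈ e) ∧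
      (∃ e ∈ E, ∃ p ∈ e, p ∈ A) ∧ ∃ e ∈ E, ∃ p ∈ e, p ∉ A := by
  set H := (SimpleGraph.fromEdgeSet (↑E : Set (Sym2 V))).induce {v : V | ∃ e ∈ E, v ∈ e}
  obtain ⟨e₀, he₀⟩ := hE
  have hne : Nonempty {v : V | ∃ e ∈ E, v ∈ e} := ⟨⟨_, e₀, he₀, Sym2.out_fst_mem e₀⟩⟩
  obtain ⟨x, y, hxy⟩ : ∃ x y, ¬ H.Reachable x y := by
    by_contra! hpre
    exact hdisc ((SimpleGraph.connected_iff H).mpr ⟨hpre, hne⟩)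
  set A : Set V := {v | ∃ hv, H.Reachable x ⟨v, hv⟩}
  have hA : IsEdgeClosed E A := by
    rintro e he p hp q hq ⟨hpW, hxp⟩
    by_cases hpq : p = q
    · exact hpq ▸ ⟨hpW, hxp⟩
    obtain rfl : e = s(p, q) := (Sym2.mem_and_mem_iff hpq).mp ⟨hp, hq⟩
    have hadj : H.Adj ⟨p, hpW⟩ ⟨q, _, he, hq⟩ := ⟨he, hpq⟩
    exact ⟨_, hxp.trans hadj.reachable⟩
  obtain ⟨e, he, hxe⟩ := x.2
  obtain ⟨f, hf, hyf⟩ := y.2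
  exact ⟨A, hA, fun v ⟨hv, _⟩ => hv, ⟨e, he, x, hxe, x.2, .refl _⟩,
    f, hf, y, hyf, fun hyA => hxy hyA.2⟩

variable {G : SimpleGraph V} {c : Finset (Sym2 V)}

lemma IsCycle.two_le_card_incident (hc : IsCycle G c) {e : Sym2 V} {v : V} (he : e ∈ c)
    (hv : v ∈ e) : 2 ≤ (c.filter (fun e => v ∈ e)).card := by
  have hpos : 0 < (c.filter (fun e => v ∈ e)).card :=
    Finset.card_pos.mpr ⟨e, Finset.mem_filter.mpr ⟨he, hv⟩⟩
  obtain ⟨r, hr⟩ := hc.2 v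
  omega

lemma IsCycle.exists_card_three_subset (hc : IsCycle G c) {a b : V} (hab : s(a, b) ∈ c) :
    ∃ e₁ e₂, a ∈ e₁ ∧ b ∈ e₂ ∧ {s(a, b), e₁, e₂} ⊆ c ∧
      ({s(a, b), e₁, e₂} : Finset (Sym2 V)).card = 3 := by
  have hne : a ≠ b := G.ne_of_adj (hc.1 hab)
  have other_edge : ∀ v ∈ s(a, b), ∃ f ∈ c, v ∈ f ∧ f ≠ s(a, b) := by
    intro v hv
    obtain ⟨f, hf, hfe⟩ := Finset.exists_mem_ne (hc.two_le_card_incident hab hv) s(a, b)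
    exact ⟨f, (Finset.mem_filter.mp hf).1, (Finset.mem_filter.mp hf).2, hfe⟩
  obtain ⟨e₁, he₁, ha, h₁⟩ := other_edge a (Sym2.mem_mk_left a b)
  obtain ⟨e₂, he₂, hb, h₂⟩ := other_edge b (Sym2.mem_mk_right a b)
  have h₁₂ : e₁ ≠ e₂ := by
    rintro rfl
    exact h₁ ((Sym2.mem_and_mem_iff hne).mp ⟨ha, hb⟩)
  refine ⟨e₁, e₂, ha, hb, ?_, Finset.card_eq_three.mpr ⟨_, _, _, h₁.symm, h₂.symm, h₁₂, rfl⟩⟩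
  simp [Finset.insert_subset_iff, hab, he₁, he₂]

lemma IsCycle.three_le_card (hc : IsCycle G c) (hne : c.Nonempty) : 3 ≤ c.card := by
  obtain ⟨e, he⟩ := hne
  induction e using Sym2.ind with
  | _ a b =>
    obtain ⟨e₁, e₂, -, -, hsub, hcard⟩ := hc.exists_card_three_subset he
    exact hcard ▸ Finset.card_le_card hsub

lemma IsCycle.exists_mem_mem_of_card_eq_three (hc : IsCycle G c) (h3 : c.card = 3)
    {e f : Sym2 V} (he : e ∈ c) (hf : f ∈ c) : ∃ v, v ∈ e ∧ v ∈ f := by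
  induction e using Sym2.ind with
  | _ a b =>
    obtain ⟨e₁, e₂, ha, hb, hsub, hcard⟩ := hc.exists_card_three_subset he
    rw [← Finset.eq_of_subset_of_card_le hsub (by omega)] at hf
    simp only [Finset.mem_insert, Finset.mem_singleton] at hf
    rcases hf with rfl | rfl | rfl
    · exact ⟨a, Sym2.mem_mk_left a b, Sym2.mem_mk_left a b⟩
    · exact ⟨a, Sym2.mem_mk_left a b, ha⟩
    · exact ⟨b, Sym2.mem_mk_right a b, hb⟩

lemma IsCycle.filter (hc : IsCycle G c) (P : Sym2 V → Prop) [DecidablePred P]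
    (hP : ∀ v, ∀ e ∈ c, ∀ f ∈ c, v ∈ e → v ∈ f → (P e ↔ P f)) : IsCycle G (c.filter P) := by
  refine ⟨fun e he => hc.1 (Finset.mem_filter.mp he).1, fun v => ?_⟩
  rw [Finset.filter_filter]
  by_cases hv : ∃ e ∈ c, v ∈ e ∧ P e
  · obtain ⟨e, he, hve, hPe⟩ := hv
    rw [Finset.filter_congr fun f hf => and_iff_right_of_imp fun hvf =>
      (hP v e he f hf hve hvf).mp hPe]
    exact hc.2 v
  · push Not at hv
    rw [Finset.filter_false_of_mem fun f hf ⟨hPf, hvf⟩ => hv f hf hvf hPf]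
    exact ⟨0, rfl⟩

/-- A short cycle cannot be split into two nonempty cycles, since each has at least three
edges. -/
lemma IsCycle.forall_exists_mem_of_card_lt_six (hc : IsCycle G c) (hc6 : c.card < 6)
    {A : Set V} (hA : IsEdgeClosed c A) (htouch : ∃ e ∈ c, ∃ p ∈ e, p ∈ A) :
    ∀ f ∈ c, ∃ q ∈ f, q ∈ A := by
  classical
  obtain ⟨e, he, htouch_e⟩ := htouch
  by_contra! hout
  obtain ⟨f, hf, hfA⟩ := hout
  set P : Sym2 V → Prop := fun e => ∃ p ∈ e, p ∈ A
  have hPv : ∀ e ∈ c, ∀ v ∈ e, (P e ↔ v ∈ A) :=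
    fun e he v hv => ⟨fun ⟨p, hp, hpA⟩ => hA e he p hp v hv hpA, fun hvA => ⟨v, hv, hvA⟩⟩
  have hP : ∀ v, ∀ e ∈ c, ∀ f ∈ c, v ∈ e → v ∈ f → (P e ↔ P f) :=
    fun v e he f hf hve hvf => (hPv e he v hve).trans (hPv f hf v hvf).symm
  have hcard_in := (hc.filter P hP).three_le_card ⟨e, Finset.mem_filter.mpr ⟨he, htouch_e⟩⟩
  have hcard_out := (hc.filter (¬ P ·) fun v e he f hf hve hvf =>
      not_congr (hP v e he f hf hve hvf))
    |>.three_le_card ⟨f, Finset.mem_filter.mpr ⟨hf, fun ⟨q, hq, hqA⟩ => hfA q hq hqA⟩⟩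
  have := Finset.card_filter_add_card_filter_not (s := c) P
  omega

variable [Fintype V]

lemma IsCycle.exists_common_edge [DecidableRel G.Adj] {d : Finset (Sym2 V)} {v : V}
    (hdeg : G.degree v ≤ 3) (hc : IsCycle G c) (hd : IsCycle G d) {e f : Sym2 V}
    (he : e ∈ c) (hve : v ∈ e) (hf : f ∈ d) (hvf : v ∈ f) : ∃ g ∈ c, g ∈ d ∧ v ∈ g := by
  have hsub : c.filter (fun e => v ∈ e) ∪ d.filter (fun e => v ∈ e) ⊆ G.incidenceFinset v := by
    intro g hg
    simp only [Finset.mem_union, Finset.mem_filter] at hg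
    rcases hg with ⟨hg, hvg⟩ | ⟨hg, hvg⟩
    · exact (G.mem_incidenceFinset v g).mpr ⟨hc.1 hg, hvg⟩
    · exact (G.mem_incidenceFinset v g).mpr ⟨hd.1 hg, hvg⟩
  have hunion := (Finset.card_le_card hsub).trans_eq (G.card_incidenceFinset_eq_degree v)
  have := Finset.card_union_add_card_inter (c.filter (fun e => v ∈ e)) (d.filter (fun e => v ∈ e))
  have := hc.two_le_card_incident he hve
  have := hd.two_le_card_incident hf hvf
  obtain ⟨g, hg⟩ : (c.filter (fun e => v ∈ e) ∩ d.filter (fun e => v ∈ e)).Nonempty :=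
    Finset.card_pos.mp (by omega)
  simp only [Finset.mem_inter, Finset.mem_filter] at hg
  exact ⟨g, hg.1.1, hg.2.1, hg.1.2⟩

lemma IsCycle.forall_exists_mem_of_card_eq_three [DecidableRel G.Adj] {t : Finset (Sym2 V)}
    {A : Set V} (hc : IsCycle G c) (hA : IsEdgeClosed c A) (ht : IsCycle G t)
    (ht3 : t.card = 3) {v : V} (hvA : v ∈ A) (hdeg : G.degree v ≤ 3) {e f : Sym2 V}
    (he : e ∈ c) (hve : v ∈ e) (hf : f ∈ t) (hvf : v ∈ f) :
    ∀ f ∈ t, ∃ p ∈ f, p ∈ A := by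
  obtain ⟨g, hgc, hgt, hvg⟩ := hc.exists_common_edge hdeg ht he hve hf hvf
  intro f' hf'
  obtain ⟨w, hwg, hwf'⟩ := ht.exists_mem_mem_of_card_eq_three ht3 hgt hf'
  exact ⟨w, hwf', hA g hgc v hvg w hwg hvA⟩

lemma mem_cycleSum_filter_iff {X : Finset (Finset (Sym2 V))} {Q : Sym2 V → Prop}
    [DecidablePred Q] (hX : ∀ c ∈ X, (∃ f ∈ c, Q f) → ∀ f ∈ c, Q f) {e : Sym2 V} :
    e ∈ cycleSum (X.filter fun c => ∃ f ∈ c, Q f) ↔ Q e ∧ e ∈ cycleSum X := by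
  simp only [cycleSum, Finset.mem_filter, Finset.mem_univ, true_and, Finset.filter_filter]
  by_cases hQ : Q e
  · rw [Finset.filter_congr fun c _ => and_iff_right_of_imp fun hec => ⟨e, hec, hQ⟩]
    exact (and_iff_right hQ).symm
  · rw [Finset.filter_false_of_mem fun c hc ⟨htouch, hec⟩ => hQ (hX c hc htouch e hec)]
    simp [hQ]

end

variable {V : Type*} [Fintype V] [DecidableEq V]

/-- In a graph of maximum degree at most `3`, if `C` is a nonempty set of
squares, none spanned by the triangles, whose total `⊕`-sum is spanned by the triangles
while the `⊕`-sum of no nonempty proper subset is, then the union of the edge sets of the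
squares of `C` forms a connected subgraph of `G`. -/
theorem circuit_is_connected (G : SimpleGraph V) [DecidableRel G.Adj]
    (hdeg : ∀ v : V, G.degree v ≤ 3)
    (C : Finset (Finset (Sym2 V))) (hCne : C.Nonempty)
    (hsq : ∀ s ∈ C, IsCycle G s ∧ s.card = 4 ∧
      ¬ InSpan {t : Finset (Sym2 V) | IsCycle G t ∧ t.card = 3} s)
    (hsum : InSpan {t : Finset (Sym2 V) | IsCycle G t ∧ t.card = 3} (cycleSum C))
    (hmin : ∀ D ⊂ C, D.Nonempty →
      ¬ InSpan {t : Finset (Sym2 V) | IsCycle G t ∧ t.card = 3} (cycleSum D)) :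
    EdgesConnected (C.sup id) := by
  classical
  obtain ⟨s₀, hs₀⟩ := hCne
  obtain ⟨e₀, he₀⟩ : s₀.Nonempty := Finset.card_pos.mp (by rw [(hsq s₀ hs₀).2.1]; omega)
  have hsub : ∀ s ∈ C, s ⊆ C.sup id := fun s hs => Finset.le_sup (f := id) hs
  by_contra hdisc
  obtain ⟨A, hA, hAU, ⟨e₁, he₁, p, hp, hpA⟩, ⟨e₂, he₂, q, hq, hqA⟩⟩ :=
    exists_isEdgeClosed_of_not_edgesConnected ⟨e₀, hsub s₀ hs₀ he₀⟩ hdisc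
  have hsq_touch : ∀ s ∈ C, (∃ f ∈ s, ∃ p ∈ f, p ∈ A) → ∀ f ∈ s, ∃ p ∈ f, p ∈ A :=
    fun s hs => (hsq s hs).1.forall_exists_mem_of_card_lt_six (by rw [(hsq s hs).2.1]; norm_num)
      (hA.mono (hsub s hs))
  obtain ⟨D, hDtri, hDC⟩ := hsum
  have htri_touch : ∀ t ∈ D, (∃ f ∈ t, ∃ p ∈ f, p ∈ A) → ∀ f ∈ t, ∃ p ∈ f, p ∈ A := by
    rintro t ht ⟨f, hft, v, hvf, hvA⟩
    obtain ⟨e, heU, hve⟩ := hAU v hvA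
    obtain ⟨s, hs, hes⟩ := Finset.mem_sup.mp heU
    exact (hsq s hs).1.forall_exists_mem_of_card_eq_three (hA.mono (hsub s hs)) (hDtri ht).1
      (hDtri ht).2 hvA (hdeg v) hes hve hft hvf
  obtain ⟨s₁, hs₁, he₁s₁⟩ := Finset.mem_sup.mp he₁
  obtain ⟨s₂, hs₂, he₂s₂⟩ := Finset.mem_sup.mp he₂
  refine hmin (C.filter fun s => ∃ f ∈ s, ∃ p ∈ f, p ∈ A) ?_ ?_
    ⟨D.filter fun t => ∃ f ∈ t, ∃ p ∈ f, p ∈ A, fun t ht => hDtri (Finset.mem_filter.mp ht).1, ?_⟩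
  · refine Finset.filter_ssubset.mpr ⟨s₂, hs₂, fun htouch => ?_⟩
    obtain ⟨r, hr, hrA⟩ := hsq_touch s₂ hs₂ htouch e₂ he₂s₂
    exact hqA (hA e₂ he₂ r hr q hq hrA)
  · exact ⟨s₁, Finset.mem_filter.mpr ⟨hs₁, e₁, he₁s₁, p, hp, hpA⟩⟩
  · ext e
    rw [mem_cycleSum_filter_iff htri_touch, mem_cycleSum_filter_iff hsq_touch, hDC]

end MCBI
end
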